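/- arXiv:2601.02134 — 3 statements merged into one kernel-verified Lean document; each statement's English description precedes it below -/
import Mathlib

section
/- For the constraint function c : ℝⁿ → ℝⁿ defined by c_i(x) = x_i(1 - x_i), whose Jacobian is J(x) = diag(1 - 2x_1, ..., 1 - 2x_n), for any R with 0 < R < 1/4 and any x ∈ ℝⁿ with ‖c(x)‖ ≤ R, one has ‖J(x)ᵀ c(x)‖ ≥ √(1 - 4R) · ‖c(x)‖. -/
/-!
Coordinatewise, `((1 - 2x) c)² = (1 - 4c) c²` for `c = x (1 - x)`, and every coordinate of `c`
is at most `‖c‖ ≤ R`. Hence `‖J(x)ᵀ c(x)‖² ≥ (1 - 4R) ‖c(x)‖²`; take square roots.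
-/

lemma one_sub_two_mul_sq (x : ℝ) : (1 - 2 * x) ^ 2 = 1 - 4 * (x * (1 - x)) := by
  ring

lemma EuclideanSpace.sqrt_mul_norm_le_norm {ι : Type*} [Fintype ι] (a : ℝ)
    (f g : EuclideanSpace ℝ ι) (h : ∀ i, a * f i ^ 2 ≤ g i ^ 2) :
    √a * ‖f‖ ≤ ‖g‖ := by
  have hsq : a * ‖f‖ ^ 2 ≤ ‖g‖ ^ 2 := by
    rw [EuclideanSpace.real_norm_sq_eq, EuclideanSpace.real_norm_sq_eq, Finset.mul_sum]
    exact Finset.sum_le_sum fun i _ => h i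
  calc √a * ‖f‖ = √(a * ‖f‖ ^ 2) := by
        rw [Real.sqrt_mul' a (sq_nonneg _), Real.sqrt_sq (norm_nonneg _)]
    _ ≤ √(‖g‖ ^ 2) := Real.sqrt_le_sqrt hsq
    _ = ‖g‖ := Real.sqrt_sq (norm_nonneg _)

theorem stmt_0_general (n : ℕ) (x : EuclideanSpace ℝ (Fin n)) (R : ℝ)
    (c g : EuclideanSpace ℝ (Fin n))
    (hc : ∀ i, c i = x i * (1 - x i))
    (hg : ∀ i, g i = (1 - 2 * x i) * c i)
    (hcR : ‖c‖ ≤ R) :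
    ‖g‖ ≥ Real.sqrt (1 - 4 * R) * ‖c‖ := by
  refine EuclideanSpace.sqrt_mul_norm_le_norm _ c g fun i => ?_
  have hci : c i ≤ R :=
    calc c i ≤ ‖c i‖ := Real.le_norm_self _
      _ ≤ ‖c‖ := PiLp.norm_apply_le c i
      _ ≤ R := hcR
  have hgi : g i ^ 2 = (1 - 4 * c i) * c i ^ 2 := by
    rw [hg i, mul_pow, one_sub_two_mul_sq, hc i]
  rw [hgi]
  exact mul_le_mul_of_nonneg_right (by linarith) (sq_nonneg _)

/-- Binary constraints `c_i(x) = x_i (1 - x_i)` satisfy the PL condition: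
if `‖c(x)‖ ≤ R < 1/4` then `‖J(x)ᵀ c(x)‖ ≥ √(1 - 4R) ‖c(x)‖`, where
`J(x)ᵀ c(x)` has components `(1 - 2 x_i) c_i(x)`. -/
theorem stmt_0 (n : ℕ) (x : EuclideanSpace ℝ (Fin n)) (R : ℝ)
    (hR0 : 0 < R) (hR : R < 1 / 4)
    (c g : EuclideanSpace ℝ (Fin n))
    (hc : ∀ i, c i = x i * (1 - x i))
    (hg : ∀ i, g i = (1 - 2 * x i) * c i)
    (hcR : ‖c‖ ≤ R) :
    ‖g‖ ≥ Real.sqrt (1 - 4 * R) * ‖c‖ :=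
  stmt_0_general n x R c g hc hg hcR
end

section
/- Let f : ℝⁿ → ℝ and c : ℝⁿ → ℝᵐ, f_low a lower bound of f, β > 0, and define Q_β(x) = f(x) + (β/2)‖c(x)‖². If points x₀ and y satisfy Q_β(y) ≤ Q_β(x₀) and ‖c(x₀)‖ ≤ ε₀/√2 with β ≥ 4(f(x₀) - f_low) ε₀⁻², then ‖c(y)‖ ≤ ε₀. -/
/-!
Since `f(y) ≥ f_low`, the descent condition `Q_β(y) ≤ Q_β(x₀)` lets the squared infeasibility grow
by at most `2 (f(x₀) - f_low) / β`, which the choice of `β` makes at most `ε₀² / 2`; the initial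
value `‖c(x₀)‖²` is at most `ε₀² / 2` as well.
-/

section QuadraticPenalty

variable {X E : Type*} [SeminormedAddCommGroup E]

noncomputable def quadraticPenalty (f : X → ℝ) (c : X → E) (β : ℝ) (x : X) : ℝ :=
  f x + β / 2 * ‖c x‖ ^ 2

theorem norm_sq_le_of_quadraticPenalty_le {f : X → ℝ} {c : X → E} {flow β : ℝ}
    (hflow : ∀ x, flow ≤ f x) (hβ : 0 < β) {x₀ y : X}
    (hQ : quadraticPenalty f c β y ≤ quadraticPenalty f c β x₀) :
    ‖c y‖ ^ 2 ≤ ‖c x₀‖ ^ 2 + 2 * (f x₀ - flow) / β := by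
  have hgain : β / 2 * (‖c y‖ ^ 2 - ‖c x₀‖ ^ 2) ≤ f x₀ - flow := by
    unfold quadraticPenalty at hQ
    linarith [hflow y]
  rw [← sub_le_iff_le_add', le_div_iff₀ hβ]
  linarith

end QuadraticPenalty

/-- If `Q_β(y) ≤ Q_β(x₀)`, `‖c(x₀)‖ ≤ ε₀/√2` and `β ≥ 4 (f(x₀) - f_low) ε₀⁻²`,
then `‖c(y)‖ ≤ ε₀`. -/
theorem stmt_4 (n m : ℕ)
    (f : EuclideanSpace ℝ (Fin n) → ℝ)
    (c : EuclideanSpace ℝ (Fin n) → EuclideanSpace ℝ (Fin m))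
    (flow : ℝ) (hflow : ∀ x, flow ≤ f x)
    (β ε₀ : ℝ) (hβ : 0 < β) (hε₀ : 0 < ε₀)
    (x₀ y : EuclideanSpace ℝ (Fin n))
    (hQ : f y + β / 2 * ‖c y‖ ^ 2 ≤ f x₀ + β / 2 * ‖c x₀‖ ^ 2)
    (hx₀ : ‖c x₀‖ ≤ ε₀ / Real.sqrt 2)
    (hβbig : β ≥ 4 * (f x₀ - flow) * ε₀⁻¹ ^ 2) :
    ‖c y‖ ≤ ε₀ := by
  have hy := norm_sq_le_of_quadraticPenalty_le (c := c) hflow hβ hQ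
  have hx₀_sq : ‖c x₀‖ ^ 2 ≤ ε₀ ^ 2 / 2 := by
    calc ‖c x₀‖ ^ 2 ≤ (ε₀ / Real.sqrt 2) ^ 2 := pow_le_pow_left₀ (norm_nonneg _) hx₀ 2
      _ = ε₀ ^ 2 / 2 := by rw [div_pow, Real.sq_sqrt zero_le_two]
  have hgap : 2 * (f x₀ - flow) / β ≤ ε₀ ^ 2 / 2 := by
    rw [div_le_iff₀ hβ]
    rw [ge_iff_le, inv_pow, ← div_eq_mul_inv, div_le_iff₀ (by positivity)] at hβbig
    linarith
  exact (pow_le_pow_iff_left₀ (norm_nonneg _) hε₀.le two_ne_zero).1 (by linarith)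
end

section
/- Let f : ℝⁿ → ℝ with lower bound f_low, c : ℝⁿ → ℝᵐ, β ≥ 1, and Q_β(x) = f(x) + (β/2)‖c(x)‖². If ‖c(x₀)‖ ≤ ε₀/√2 and β < 4(f(x₀) - f_low) ε₀⁻², then any point y with Q_β(y) ≤ Q_β(x₀) satisfies f(y) ≤ 2 f(x₀) - f_low, i.e., y lies in the sublevel set L_f(2 f(x₀) - f_low). -/
lemma sq_le_half_sq_of_le_div_sqrt_two {r ε : ℝ} (hr : 0 ≤ r) (h : r ≤ ε / Real.sqrt 2) :
    r ^ 2 ≤ ε ^ 2 / 2 := by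
  calc r ^ 2 ≤ (ε / Real.sqrt 2) ^ 2 := pow_le_pow_left₀ hr h 2
    _ = ε ^ 2 / 2 := by rw [div_pow, Real.sq_sqrt zero_le_two]

lemma mul_sq_lt_of_lt_mul_inv_sq {β a ε : ℝ} (hε : ε ≠ 0) (h : β < a * ε⁻¹ ^ 2) :
    β * ε ^ 2 < a := by
  have hε2 : 0 < ε ^ 2 := by positivity
  calc β * ε ^ 2 < a * ε⁻¹ ^ 2 * ε ^ 2 := mul_lt_mul_of_pos_right h hε2
    _ = a := by field_simp

theorem stmt_5_general (n m : ℕ)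
    (f : EuclideanSpace ℝ (Fin n) → ℝ)
    (c : EuclideanSpace ℝ (Fin n) → EuclideanSpace ℝ (Fin m))
    (flow : ℝ)
    (β ε₀ : ℝ) (hβ : 1 ≤ β) (hε₀ : 0 < ε₀)
    (x₀ y : EuclideanSpace ℝ (Fin n))
    (hx₀ : ‖c x₀‖ ≤ ε₀ / Real.sqrt 2)
    (hβsmall : β < 4 * (f x₀ - flow) * ε₀⁻¹ ^ 2)
    (hQ : f y + β / 2 * ‖c y‖ ^ 2 ≤ f x₀ + β / 2 * ‖c x₀‖ ^ 2) :
    f y ≤ 2 * f x₀ - flow := by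
  have hβ₀ : 0 ≤ β := zero_le_one.trans hβ
  have hcx₀ := sq_le_half_sq_of_le_div_sqrt_two (norm_nonneg _) hx₀
  have hβε := mul_sq_lt_of_lt_mul_inv_sq hε₀.ne' hβsmall
  have hpen₀ : β / 2 * ‖c x₀‖ ^ 2 ≤ β * ε₀ ^ 2 / 4 := by nlinarith
  have hpen : 0 ≤ β / 2 * ‖c y‖ ^ 2 := by positivity
  linarith

/-- If `‖c(x₀)‖ ≤ ε₀/√2`, `β < 4 (f(x₀) - f_low) ε₀⁻²` (with `β ≥ 1`), then any
`y` with `Q_β(y) ≤ Q_β(x₀)` satisfies `f(y) ≤ 2 f(x₀) - f_low`. -/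
theorem stmt_5 (n m : ℕ)
    (f : EuclideanSpace ℝ (Fin n) → ℝ)
    (c : EuclideanSpace ℝ (Fin n) → EuclideanSpace ℝ (Fin m))
    (flow : ℝ) (hflow : ∀ x, flow ≤ f x)
    (β ε₀ : ℝ) (hβ : 1 ≤ β) (hε₀ : 0 < ε₀)
    (x₀ y : EuclideanSpace ℝ (Fin n))
    (hx₀ : ‖c x₀‖ ≤ ε₀ / Real.sqrt 2)
    (hβsmall : β < 4 * (f x₀ - flow) * ε₀⁻¹ ^ 2)
    (hQ : f y + β / 2 * ‖c y‖ ^ 2 ≤ f x₀ + β / 2 * ‖c x₀‖ ^ 2) :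
    f y ≤ 2 * f x₀ - flow :=
  stmt_5_general n m f c flow β ε₀ hβ hε₀ x₀ y hx₀ hβsmall hQ
end
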